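/- arXiv:1910.06040 — 4 statements merged into one kernel-verified Lean document; each statement's English description precedes it below -/
import Mathlib

section
/- Let s ≥ 1, n ≥ 1, N ≥ 1, let β = diag(β_1, …, β_n) be a real diagonal n×n matrix, let Y⁰ ∈ ℝ^{2n×(2N+1)}, h > 0, and define Φ : ℝ^{2sn×(2N+1)} → ℝ^{2sn×(2N+1)} by Φ(Γ) = ( e₁ ⊗ ((β ⊗ J₂) Y⁰) ) D² + h ( (X_s ⊗ β ⊗ J₂) Γ ) D², where e₁ = (1, 0, …, 0)ᵀ ∈ ℝ^s and ⊗ denotes the Kronecker product. If h · ‖X_s‖ · ‖β‖ · ‖D²‖ < 1 (spectral norms, with ‖D²‖ = (2πN/(b − a))²), then Φ is a contraction with Lipschitz constant at most h‖X_s‖‖β‖‖D²‖; consequently Φ has a unique fixed point Γ*, and for every starting matrix Γ⁰ the fixed-point iteration Γ^{ℓ+1} = Φ(Γ^ℓ) converges to Γ* as ℓ → ∞. -/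
/-! The map is affine with linear part `Γ ↦ h • ((X_s ⊗ β ⊗ J₂) * Γ * D²)`. The spectral norm is
submultiplicative on Kronecker products, since `A ⊗ B = (A ⊗ 1) * (1 ⊗ B)` and both factors are,
up to a permutation of indices, block diagonal with copies of `A` resp. `B` on the diagonal;
`J₂` is orthogonal. So the linear part has norm at most `h‖X_s‖‖β‖‖D²‖ < 1`, and Banach's
fixed-point theorem applies. -/

open Real Filter
open scoped Matrix.Norms.L2Operator Kronecker

namespace Matrix

variable {𝕜 : Type*} [RCLike 𝕜] {m n o m' n' : Type*} [Fintype m] [Fintype n] [Fintype o]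
  [Fintype m'] [Fintype n'] [DecidableEq n] [DecidableEq n']

lemma l2_opNorm_blockDiagonal_le [DecidableEq o] {c : ℝ} (hc : 0 ≤ c)
    (M : o → Matrix m n 𝕜) (hM : ∀ k, ‖M k‖ ≤ c) : ‖blockDiagonal M‖ ≤ c := by
  rw [l2_opNorm_def]
  refine ContinuousLinearMap.opNorm_le_bound _ hc fun x => ?_
  refine (sq_le_sq₀ (by positivity) (by positivity)).mp ?_
  let y : o → EuclideanSpace 𝕜 n := fun k => WithLp.toLp 2 fun j => x (j, k)
  have hy : ‖x‖ ^ 2 = ∑ k, ‖y k‖ ^ 2 := by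
    simp [EuclideanSpace.norm_sq_eq, Fintype.sum_prod_type_right, y]
  calc _ = ∑ k, ‖(EuclideanSpace.equiv m 𝕜).symm (M k *ᵥ y k)‖ ^ 2 := by
        simp [EuclideanSpace.norm_sq_eq, Fintype.sum_prod_type_right, mulVec, dotProduct,
          blockDiagonal_apply, y]
    _ ≤ ∑ k, (c * ‖y k‖) ^ 2 := by
        gcongr with k
        exact (l2_opNorm_mulVec _ _).trans (by gcongr; exact hM k)
    _ = (c * ‖x‖) ^ 2 := by simp [mul_pow, hy, Finset.mul_sum]

lemma l2_opNorm_reindex_le (e : m ≃ m') (f : n ≃ n') (A : Matrix m n 𝕜) :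
    ‖reindex e f A‖ ≤ ‖A‖ := by
  rw [l2_opNorm_def]
  refine ContinuousLinearMap.opNorm_le_bound _ (norm_nonneg _) fun x => ?_
  let y : EuclideanSpace 𝕜 n := WithLp.toLp 2 (x ∘ f)
  have hy : ‖y‖ = ‖x‖ := by
    simp [EuclideanSpace.norm_eq, y, Equiv.sum_comp f fun i => ‖x i‖ ^ 2]
  calc _ = ‖(EuclideanSpace.equiv m 𝕜).symm (A *ᵥ y)‖ := by
        simp [EuclideanSpace.norm_eq, y, ← Equiv.sum_comp e.symm]; rfl
    _ ≤ ‖A‖ * ‖x‖ := hy ▸ l2_opNorm_mulVec _ _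

lemma l2_opNorm_kronecker_one_le [DecidableEq o] (A : Matrix m n 𝕜) :
    ‖A ⊗ₖ (1 : Matrix o o 𝕜)‖ ≤ ‖A‖ := by
  rw [kronecker_one]
  exact l2_opNorm_blockDiagonal_le (norm_nonneg A) _ fun _ => le_rfl

lemma l2_opNorm_one_kronecker_le [DecidableEq o] (B : Matrix m n 𝕜) :
    ‖(1 : Matrix o o 𝕜) ⊗ₖ B‖ ≤ ‖B‖ := by
  rw [one_kronecker]
  exact (l2_opNorm_reindex_le _ _ _).trans
    (l2_opNorm_blockDiagonal_le (norm_nonneg B) _ fun _ => le_rfl)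

lemma l2_opNorm_kronecker_le [DecidableEq m'] (A : Matrix m n 𝕜) (B : Matrix m' n' 𝕜) :
    ‖A ⊗ₖ B‖ ≤ ‖A‖ * ‖B‖ := by
  calc ‖A ⊗ₖ B‖ = ‖(A ⊗ₖ (1 : Matrix m' m' 𝕜)) * ((1 : Matrix n n 𝕜) ⊗ₖ B)‖ := by
        rw [← mul_kronecker_mul, Matrix.mul_one, Matrix.one_mul]
    _ ≤ ‖A ⊗ₖ (1 : Matrix m' m' 𝕜)‖ * ‖(1 : Matrix n n 𝕜) ⊗ₖ B‖ := l2_opNorm_mul _ _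
    _ ≤ ‖A‖ * ‖B‖ := by
        gcongr
        exacts [l2_opNorm_kronecker_one_le A, l2_opNorm_one_kronecker_le B]

lemma l2_opNorm_smul_mul_mul_le {l p : Type*} [Fintype l] [Fintype p] [DecidableEq m]
    [DecidableEq p] {c : ℝ} (hc : 0 ≤ c) (A : Matrix l m ℝ) (X : Matrix m n ℝ)
    (B : Matrix n p ℝ) : ‖c • (A * X * B)‖ ≤ c * ‖A‖ * ‖B‖ * ‖X‖ := by
  rw [norm_smul, Real.norm_of_nonneg hc]
  calc c * ‖A * X * B‖ ≤ c * (‖A‖ * ‖X‖ * ‖B‖) := by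
        gcongr
        exact (l2_opNorm_mul _ _).trans (by gcongr; exact l2_opNorm_mul _ _)
    _ = c * ‖A‖ * ‖B‖ * ‖X‖ := by ring

end Matrix

open Matrix

lemma l2_opNorm_J2 : ‖!![(0 : ℝ), 1; -1, 0]‖ = 1 := by
  refine CStarRing.norm_of_mem_unitary ((mem_unitaryGroup_iff' (α := ℝ)).mpr ?_)
  ext i j
  fin_cases i <;> fin_cases j <;> simp [Matrix.mul_apply, Fin.sum_univ_two]

theorem exists_fixedPoint_unique_tendsto_iterate {E : Type*} [MetricSpace E] [CompleteSpace E]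
    [Nonempty E] {f : E → E} {K : ℝ} (hK : K < 1) (hf : ∀ x y, dist (f x) (f y) ≤ K * dist x y) :
    ∃ x, f x = x ∧ (∀ y, f y = y → y = x) ∧ ∀ x₀, Tendsto (fun ℓ => f^[ℓ] x₀) atTop (nhds x) := by
  have hf' : ContractingWith K.toNNReal f :=
    ⟨by simpa using hK, LipschitzWith.of_dist_le' hf⟩
  exact ⟨hf'.fixedPoint f, hf'.fixedPoint_isFixedPt, fun _ hy => hf'.fixedPoint_unique hy,
    hf'.tendsto_iterate_fixedPoint⟩

theorem hbvm_fixed_point_iteration_converges_general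
    (s n N : ℕ)
    (Xs : Matrix (Fin s) (Fin s) ℝ)
    (D : Matrix (Fin (2 * N + 1)) (Fin (2 * N + 1)) ℝ)
    (J2 : Matrix (Fin 2) (Fin 2) ℝ) (hJ2 : J2 = !![0, 1; -1, 0])
    (βM : Matrix (Fin n) (Fin n) ℝ)
    (Y0 : Matrix (Fin n × Fin 2) (Fin (2 * N + 1)) ℝ)
    (h : ℝ) (hh : 0 < h)
    (Φ : Matrix ((Fin s × Fin n) × Fin 2) (Fin (2 * N + 1)) ℝ →
         Matrix ((Fin s × Fin n) × Fin 2) (Fin (2 * N + 1)) ℝ)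
    (hΦ : ∀ Γ r c, Φ Γ r c =
      (if (r.1.1 : ℕ) = 0 then 1 else 0) * ((βM ⊗ₖ J2) * Y0 * (D * D)) (r.1.2, r.2) c
        + h * (((Xs ⊗ₖ βM) ⊗ₖ J2) * Γ * (D * D)) r c)
    (hcontr : h * ‖Xs‖ * ‖βM‖ * ‖D * D‖ < 1) :
    (∀ Γ₁ Γ₂, ‖Φ Γ₁ - Φ Γ₂‖ ≤ (h * ‖Xs‖ * ‖βM‖ * ‖D * D‖) * ‖Γ₁ - Γ₂‖)
    ∧ ∃ Γstar, Φ Γstar = Γstar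
        ∧ (∀ Γ', Φ Γ' = Γ' → Γ' = Γstar)
        ∧ ∀ Γ0, Tendsto (fun ℓ : ℕ => Φ^[ℓ] Γ0) atTop (nhds Γstar) := by
  have hM : ‖(Xs ⊗ₖ βM) ⊗ₖ J2‖ ≤ ‖Xs‖ * ‖βM‖ :=
    calc _ ≤ ‖Xs ⊗ₖ βM‖ * ‖J2‖ := l2_opNorm_kronecker_le _ _
      _ ≤ ‖Xs‖ * ‖βM‖ := by
        rw [hJ2, l2_opNorm_J2, mul_one]
        exact l2_opNorm_kronecker_le _ _
  have hlip : ∀ Γ₁ Γ₂, ‖Φ Γ₁ - Φ Γ₂‖ ≤ (h * ‖Xs‖ * ‖βM‖ * ‖D * D‖) * ‖Γ₁ - Γ₂‖ := by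
    intro Γ₁ Γ₂
    have hsub : Φ Γ₁ - Φ Γ₂ = h • ((Xs ⊗ₖ βM) ⊗ₖ J2 * (Γ₁ - Γ₂) * (D * D)) := by
      ext r c
      simp only [Matrix.sub_apply, hΦ, Matrix.smul_apply, Matrix.mul_sub, Matrix.sub_mul, smul_eq_mul]
      ring
    calc ‖Φ Γ₁ - Φ Γ₂‖ ≤ h * ‖(Xs ⊗ₖ βM) ⊗ₖ J2‖ * ‖D * D‖ * ‖Γ₁ - Γ₂‖ :=
          hsub ▸ l2_opNorm_smul_mul_mul_le hh.le _ _ _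
      _ ≤ h * (‖Xs‖ * ‖βM‖) * ‖D * D‖ * ‖Γ₁ - Γ₂‖ := by gcongr
      _ = _ := by ring
  exact ⟨hlip, exists_fixedPoint_unique_tendsto_iterate hcontr fun Γ₁ Γ₂ => by
    simpa only [dist_eq_norm] using hlip Γ₁ Γ₂⟩

/-- If `h‖X_s‖‖β‖‖D²‖ < 1` (spectral norms), then the fixed-point map
`Φ(Γ) = (e₁ ⊗ ((β ⊗ J₂)Y⁰))D² + h((X_s ⊗ β ⊗ J₂)Γ)D²` of the HBVM iteration (case `γ = 0`)
is a contraction with Lipschitz constant at most `h‖X_s‖‖β‖‖D²‖`; hence it has a unique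
fixed point to which the fixed-point iteration converges from every starting matrix. -/
theorem hbvm_fixed_point_iteration_converges
    (s n N : ℕ) (hs : 1 ≤ s) (hn : 1 ≤ n) (hN : 1 ≤ N)
    (a b : ℝ) (hab : a < b)
    (ξ : ℕ → ℝ)
    (hξ : ∀ i : ℕ, ξ i = 1 / Real.sqrt (2 * Real.sqrt |4 * (i : ℝ) ^ 2 - 1|))
    (Xs : Matrix (Fin s) (Fin s) ℝ)
    (hXs : ∀ i j : Fin s, Xs i j =
      if (i : ℕ) = 0 ∧ (j : ℕ) = 0 then ξ 0
      else if (i : ℕ) = (j : ℕ) + 1 then ξ (i : ℕ)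
      else if (j : ℕ) = (i : ℕ) + 1 then -(ξ (j : ℕ))
      else 0)
    (D : Matrix (Fin (2 * N + 1)) (Fin (2 * N + 1)) ℝ)
    (hD : D = Matrix.diagonal (fun j : Fin (2 * N + 1) =>
      2 * π / (b - a) * (⌈((j : ℕ) : ℝ) / 2⌉ : ℤ)))
    (J2 : Matrix (Fin 2) (Fin 2) ℝ) (hJ2 : J2 = !![0, 1; -1, 0])
    (β : Fin n → ℝ) (βM : Matrix (Fin n) (Fin n) ℝ) (hβM : βM = Matrix.diagonal β)
    (Y0 : Matrix (Fin n × Fin 2) (Fin (2 * N + 1)) ℝ)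
    (h : ℝ) (hh : 0 < h)
    (Φ : Matrix ((Fin s × Fin n) × Fin 2) (Fin (2 * N + 1)) ℝ →
         Matrix ((Fin s × Fin n) × Fin 2) (Fin (2 * N + 1)) ℝ)
    (hΦ : ∀ Γ r c, Φ Γ r c =
      (if (r.1.1 : ℕ) = 0 then 1 else 0) * ((βM ⊗ₖ J2) * Y0 * (D * D)) (r.1.2, r.2) c
        + h * (((Xs ⊗ₖ βM) ⊗ₖ J2) * Γ * (D * D)) r c)
    (hcontr : h * ‖Xs‖ * ‖βM‖ * ‖D * D‖ < 1) :
    (∀ Γ₁ Γ₂, ‖Φ Γ₁ - Φ Γ₂‖ ≤ (h * ‖Xs‖ * ‖βM‖ * ‖D * D‖) * ‖Γ₁ - Γ₂‖)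
    ∧ ∃ Γstar, Φ Γstar = Γstar
        ∧ (∀ Γ', Φ Γ' = Γ' → Γ' = Γstar)
        ∧ ∀ Γ0, Tendsto (fun ℓ : ℕ => Φ^[ℓ] Γ0) atTop (nhds Γstar) :=
  hbvm_fixed_point_iteration_converges_general s n N Xs D J2 hJ2 βM Y0 h hh Φ hΦ hcontr
end

section
/- Let s ≥ 1, n ≥ 1, N ≥ 1, h > 0, ρ > 0, and let β = diag(β_1, …, β_n) be a real diagonal n×n matrix. For i = 1, …, n set B_i = hρβ_i D² and θ_i = [[(I+B_i²)^{−1}, B_i(I+B_i²)^{−1}], [−B_i(I+B_i²)^{−1}, (I+B_i²)^{−1}]] ∈ ℝ^{2(2N+1)×2(2N+1)}, where I is the (2N+1)×(2N+1) identity. Then the matrix I − hρ (I_s ⊗ β ⊗ J₂ ⊗ D²) of size 2sn(2N+1) is invertible, and its inverse equals I_s ⊗ blockdiag(θ_1, …, θ_n), where ⊗ is the Kronecker product and I_s the s×s identity. -/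
open Real
open scoped Kronecker

/-! Because `β` is diagonal, `1 - hρ (I_s ⊗ β ⊗ J₂ ⊗ D²)` is, up to reordering the index, block
diagonal with blocks `1 - J₂ ⊗ B_i`, and `I_s ⊗ blockdiag(θ_i)` has the same shape; so it suffices
to check `(1 - J₂ ⊗ B_i) θ_i = 1` block by block. Since `J₂² = -1`, the cross terms cancel and
`(1 - J₂ ⊗ B)(1 ⊗ C + J₂ ⊗ BC) = 1 ⊗ (1 + B²) C`, where `1 + B_i²` is invertible because `B_i` is a
real diagonal matrix. -/

namespace Matrix

variable {R : Type*} [CommRing R] {k l m : Type*} [DecidableEq k] [DecidableEq l]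
  [Fintype m] [DecidableEq m]

theorem one_sub_kronecker_mul_eq_one [Fintype k] {J : Matrix m m R} (hJ : J * J = -1)
    {B C : Matrix k k R} (hC : (1 + B * B) * C = 1) :
    (1 - J ⊗ₖ B) * (1 ⊗ₖ C + J ⊗ₖ (B * C)) = 1 := by
  have hJB : J ⊗ₖ B * (J ⊗ₖ (B * C)) = -(1 ⊗ₖ (B * B * C)) := by
    rw [← mul_kronecker_mul, hJ, mul_assoc]
    ext
    simp
  calc (1 - J ⊗ₖ B) * (1 ⊗ₖ C + J ⊗ₖ (B * C))
      = 1 ⊗ₖ C + 1 ⊗ₖ (B * B * C) + (J ⊗ₖ (B * C) - J ⊗ₖ B * (1 ⊗ₖ C)) := by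
        rw [sub_mul, one_mul, mul_add, hJB]; abel
    _ = 1 ⊗ₖ ((1 + B * B) * C) := by
        rw [← mul_kronecker_mul, mul_one, sub_self, add_zero, ← kronecker_add, add_mul, one_mul]
    _ = 1 := by rw [hC, one_kronecker_one]

theorem isUnit_one_add_diagonal_mul_self [Fintype k] {K : Type*} [Field K] [LinearOrder K]
    [IsStrictOrderedRing K] (w : k → K) : IsUnit (1 + diagonal w * diagonal w) := by
  rw [diagonal_mul_diagonal, ← diagonal_one, diagonal_add, isUnit_diagonal, Pi.isUnit_iff]
  exact fun j => (add_pos_of_pos_of_nonneg one_pos (mul_self_nonneg (w j))).ne'.isUnit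

theorem one_sub_smul_diagonal_kronecker (c : R) (d : l → R) (X : Matrix k k R) :
    1 - c • (diagonal d ⊗ₖ X) =
      reindex (.prodComm _ _) (.prodComm _ _) (blockDiagonal fun i => 1 - (c * d i) • X) := by
  rw [diagonal_kronecker]
  ext ⟨i, x⟩ ⟨j, y⟩
  by_cases hij : i = j
  · subst hij; simp [one_apply, mul_smul]
  · simp [blockDiagonal_apply, hij]

theorem one_sub_smul_one_kronecker (c : R) (X : Matrix k k R) :
    1 - c • ((1 : Matrix l l R) ⊗ₖ X) =
      reindex (.prodComm _ _) (.prodComm _ _) (blockDiagonal fun _ => 1 - c • X) := by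
  simpa using one_sub_smul_diagonal_kronecker c (1 : l → R) X

theorem reindex_blockDiagonal_mul_eq_one [Fintype k] {o p : Type*} [Fintype o] [DecidableEq o]
    [Fintype p] [DecidableEq p] (e : k × o ≃ p) {M N : o → Matrix k k R} (h : ∀ i, M i * N i = 1) :
    reindex e e (blockDiagonal M) * reindex e e (blockDiagonal N) = 1 := by
  rw [reindex_apply, reindex_apply, submatrix_mul_equiv, ← blockDiagonal_mul,
    show (fun i => M i * N i) = 1 from funext h, blockDiagonal_one, submatrix_one_equiv]

end Matrix

open Matrix

theorem blended_iteration_weight_matrix_general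
    (s n N : ℕ)
    (a b : ℝ)
    (h ρ : ℝ)
    (β : Fin n → ℝ) (βM : Matrix (Fin n) (Fin n) ℝ) (hβM : βM = Matrix.diagonal β)
    (D : Matrix (Fin (2 * N + 1)) (Fin (2 * N + 1)) ℝ)
    (hD : D = Matrix.diagonal (fun j : Fin (2 * N + 1) =>
      2 * π / (b - a) * (⌈((j : ℕ) : ℝ) / 2⌉ : ℤ)))
    (J2 : Matrix (Fin 2) (Fin 2) ℝ) (hJ2 : J2 = !![0, 1; -1, 0])
    (B : Fin n → Matrix (Fin (2 * N + 1)) (Fin (2 * N + 1)) ℝ)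
    (hB : ∀ i, B i = (h * ρ * β i) • (D * D))
    (θ : Fin n → Matrix (Fin 2 × Fin (2 * N + 1)) (Fin 2 × Fin (2 * N + 1)) ℝ)
    (hθ : ∀ i, θ i =
      (1 : Matrix (Fin 2) (Fin 2) ℝ) ⊗ₖ (1 + B i * B i)⁻¹
        + J2 ⊗ₖ (B i * (1 + B i * B i)⁻¹))
    (BD : Matrix (Fin n × (Fin 2 × Fin (2 * N + 1)))
                 (Fin n × (Fin 2 × Fin (2 * N + 1))) ℝ)
    (hBD : ∀ p q, BD p q = if p.1 = q.1 then θ p.1 p.2 q.2 else 0) :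
    IsUnit (1 - (h * ρ) •
        ((1 : Matrix (Fin s) (Fin s) ℝ) ⊗ₖ (βM ⊗ₖ (J2 ⊗ₖ (D * D)))))
    ∧ (1 - (h * ρ) •
        ((1 : Matrix (Fin s) (Fin s) ℝ) ⊗ₖ (βM ⊗ₖ (J2 ⊗ₖ (D * D)))))⁻¹ =
        (1 : Matrix (Fin s) (Fin s) ℝ) ⊗ₖ BD := by
  have hJ : J2 * J2 = -1 := by
    subst hJ2
    ext i j
    fin_cases i <;> fin_cases j <;> simp [Matrix.mul_apply, Fin.sum_univ_two]
  have hθ_inv : ∀ i, (1 - J2 ⊗ₖ B i) * θ i = 1 := fun i => by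
    have hunit : IsUnit (1 + B i * B i) := by
      rw [hB i, hD, diagonal_mul_diagonal, ← diagonal_smul]
      exact isUnit_one_add_diagonal_mul_self _
    rw [hθ i]
    exact one_sub_kronecker_mul_eq_one hJ (mul_nonsing_inv _ ((isUnit_iff_isUnit_det _).mp hunit))
  have hBD_block : BD = reindex (.prodComm _ _) (.prodComm _ _) (blockDiagonal θ) := by
    ext p q
    simp [hBD, blockDiagonal_apply]
  have hinner : (1 - (h * ρ) • (βM ⊗ₖ (J2 ⊗ₖ (D * D)))) * BD = 1 := by
    rw [hβM, one_sub_smul_diagonal_kronecker, hBD_block]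
    refine reindex_blockDiagonal_mul_eq_one _ fun i => ?_
    rw [← kronecker_smul, ← hB]
    exact hθ_inv i
  have hright : (1 - (h * ρ) • ((1 : Matrix (Fin s) (Fin s) ℝ) ⊗ₖ (βM ⊗ₖ (J2 ⊗ₖ (D * D))))) *
      ((1 : Matrix (Fin s) (Fin s) ℝ) ⊗ₖ BD) = 1 := by
    rw [one_sub_smul_one_kronecker, one_kronecker]
    refine reindex_blockDiagonal_mul_eq_one _ fun _ => ?_
    simpa using hinner
  exact ⟨(isUnit_iff_isUnit_det _).mpr (isUnit_det_of_right_inverse hright),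
    inv_eq_right_inv hright⟩

/-- The matrix `I − hρ (I_s ⊗ β ⊗ J₂ ⊗ D²)` is invertible, with inverse
`Θ = I_s ⊗ blockdiag(θ_1, …, θ_n)`, where
`θ_i = [[(I+B_i²)⁻¹, B_i(I+B_i²)⁻¹], [−B_i(I+B_i²)⁻¹, (I+B_i²)⁻¹]]` and `B_i = hρβ_i D²`
(here `θ_i` is written in equivalent Kronecker form `I₂ ⊗ (I+B_i²)⁻¹ + J₂ ⊗ B_i(I+B_i²)⁻¹`). -/
theorem blended_iteration_weight_matrix
    (s n N : ℕ) (hs : 1 ≤ s) (hn : 1 ≤ n) (hN : 1 ≤ N)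
    (a b : ℝ) (hab : a < b)
    (h ρ : ℝ) (hh : 0 < h) (hρ : 0 < ρ)
    (β : Fin n → ℝ) (βM : Matrix (Fin n) (Fin n) ℝ) (hβM : βM = Matrix.diagonal β)
    (D : Matrix (Fin (2 * N + 1)) (Fin (2 * N + 1)) ℝ)
    (hD : D = Matrix.diagonal (fun j : Fin (2 * N + 1) =>
      2 * π / (b - a) * (⌈((j : ℕ) : ℝ) / 2⌉ : ℤ)))
    (J2 : Matrix (Fin 2) (Fin 2) ℝ) (hJ2 : J2 = !![0, 1; -1, 0])
    (B : Fin n → Matrix (Fin (2 * N + 1)) (Fin (2 * N + 1)) ℝ)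
    (hB : ∀ i, B i = (h * ρ * β i) • (D * D))
    (θ : Fin n → Matrix (Fin 2 × Fin (2 * N + 1)) (Fin 2 × Fin (2 * N + 1)) ℝ)
    (hθ : ∀ i, θ i =
      (1 : Matrix (Fin 2) (Fin 2) ℝ) ⊗ₖ (1 + B i * B i)⁻¹
        + J2 ⊗ₖ (B i * (1 + B i * B i)⁻¹))
    (BD : Matrix (Fin n × (Fin 2 × Fin (2 * N + 1)))
                 (Fin n × (Fin 2 × Fin (2 * N + 1))) ℝ)
    (hBD : ∀ p q, BD p q = if p.1 = q.1 then θ p.1 p.2 q.2 else 0) :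
    IsUnit (1 - (h * ρ) •
        ((1 : Matrix (Fin s) (Fin s) ℝ) ⊗ₖ (βM ⊗ₖ (J2 ⊗ₖ (D * D)))))
    ∧ (1 - (h * ρ) •
        ((1 : Matrix (Fin s) (Fin s) ℝ) ⊗ₖ (βM ⊗ₖ (J2 ⊗ₖ (D * D)))))⁻¹ =
        (1 : Matrix (Fin s) (Fin s) ℝ) ⊗ₖ BD :=
  blended_iteration_weight_matrix_general s n N a b h ρ β βM hβM D hD J2 hJ2 B hB θ hθ BD hBD
end

section
/- Let N ≥ 1, n ≥ 1, let β = diag(β_1, …, β_n) be a real diagonal matrix and γ ∈ ℝ^{n×n} a symmetric matrix. For q, p ∈ ℝ^{n×(2N+1)} with columns q_j, p_j ∈ ℝ^n (j = 0, …, 2N), write (q w(x)) = Σ_{j=0}^{2N} q_j w_j(x) ∈ ℝ^n and similarly (p w(x)), and define H(q, p) = (1/2) Σ_{j=0}^{2N} d_j² (q_jᵀ β q_j + p_jᵀ β p_j) − (1/4) ∫_a^b ((q w(x))² + (p w(x))²)ᵀ γ ((q w(x))² + (p w(x))²) dx, where v² denotes the componentwise square of a vector v ∈ ℝ^n. Then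 H is differentiable, and for all i = 1, …, n and j = 0, …, 2N its partial derivatives are ∂H/∂p_{ij}(q, p) = d_j² β_i p_{ij} − ∫_a^b ( Σ_{k=1}^n γ_{ik} ((q w(x))_k² + (p w(x))_k²) ) (p w(x))_i w_j(x) dx and ∂H/∂q_{ij}(q, p) = d_j² β_i q_{ij} − ∫_a^b ( Σ_{k=1}^n γ_{ik} ((q w(x))_k² + (p w(x))_k²) ) (q w(x))_i w_j(x) dx. -/
open Real MeasureTheory intervalIntegral Finset

/-!
The Hamiltonian is symmetric under `q ↔ p`, so it suffices to differentiate in `p`. The kinetic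
part is a diagonal quadratic form. In the potential part one differentiates under the integral
sign (the integrand and its `τ`-derivative are jointly continuous, hence bounded on compacts).
With `A_i = (qw)_i² + (pw)_i²` the integrand is the symmetric quadratic form
`Σ_{i,k} A_i γ_{ik} A_k`, whose derivative is `2 Σ_i A_i' (γ A)_i`, and moving `p_{ij}` changes
only `A_i`, at the rate `2 (pw)_i w_j`. Joint differentiability in `(q, p)` holds because the
integrand is a polynomial in `(q, p, w(x))` with `w` continuous.
-/

section ParametricIntegral
open Metric Set

variable {a b : ℝ}

theorem hasDerivAt_intervalIntegral_of_continuous {F F' : ℝ → ℝ → ℝ} {τ₀ : ℝ}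
    (hF : Continuous fun z : ℝ × ℝ => F z.1 z.2)
    (hF' : Continuous fun z : ℝ × ℝ => F' z.1 z.2)
    (hdiff : ∀ τ x, HasDerivAt (F · x) (F' τ x) τ) :
    HasDerivAt (fun τ => ∫ x in a..b, F τ x) (∫ x in a..b, F' τ₀ x) τ₀ := by
  obtain ⟨C, hC⟩ := ((isCompact_closedBall τ₀ 1).prod isCompact_uIcc).exists_bound_of_continuousOn
    hF'.continuousOn
  refine (hasDerivAt_integral_of_dominated_loc_of_deriv_le (bound := fun _ => C)
    (ball_mem_nhds τ₀ one_pos) ?_ ?_ ?_ ?_ intervalIntegrable_const ?_).2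
  · exact .of_forall fun τ => (hF.comp (.prodMk_right τ)).aestronglyMeasurable
  · exact (hF.comp (.prodMk_right τ₀)).intervalIntegrable a b
  · exact (hF'.comp (.prodMk_right τ₀)).aestronglyMeasurable
  · exact .of_forall fun x hx τ hτ => hC (τ, x) ⟨ball_subset_closedBall hτ, uIoc_subset_uIcc hx⟩
  · exact .of_forall fun x _ τ _ => hdiff τ x

theorem differentiable_intervalIntegral_comp {E V : Type*} [NormedAddCommGroup E]
    [NormedSpace ℝ E] [ProperSpace E] [NormedAddCommGroup V] [NormedSpace ℝ V]
    {P : E × V → ℝ} (hP : ContDiff ℝ 1 P) {φ : ℝ → V} (hφ : Continuous φ) :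
    Differentiable ℝ fun u => ∫ x in a..b, P (u, φ x) := by
  intro u₀
  let P' : E → ℝ → E →L[ℝ] ℝ := fun u x => (fderiv ℝ P (u, φ x)).comp (.inl ℝ E V)
  have hφ' : Continuous fun z : E × ℝ => (z.1, φ z.2) :=
    continuous_fst.prodMk (hφ.comp continuous_snd)
  have hP'c : Continuous fun z : E × ℝ => P' z.1 z.2 :=
    ((hP.continuous_fderiv one_ne_zero).comp hφ').clm_comp continuous_const
  have hPc : Continuous fun z : E × ℝ => P (z.1, φ z.2) := hP.continuous.comp hφ'
  obtain ⟨C, hC⟩ := ((isCompact_closedBall u₀ 1).prod isCompact_uIcc).exists_bound_of_continuousOn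
    hP'c.continuousOn
  refine (hasFDerivAt_integral_of_dominated_of_fderiv_le (F' := P') (bound := fun _ => C)
    (ball_mem_nhds u₀ one_pos) ?_ ?_ ?_ ?_ intervalIntegrable_const ?_).differentiableAt
  · exact .of_forall fun u => (hPc.comp (.prodMk_right u)).aestronglyMeasurable
  · exact (hPc.comp (.prodMk_right u₀)).intervalIntegrable a b
  · exact (hP'c.comp (.prodMk_right u₀)).aestronglyMeasurable
  · exact .of_forall fun x hx u hu => hC (u, x) ⟨ball_subset_closedBall hu, uIoc_subset_uIcc hx⟩
  · exact .of_forall fun x _ u _ =>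
      (hP.differentiable one_ne_zero (u, φ x)).hasFDerivAt.comp u
        (hasFDerivAt_prodMk_left u (φ x))

end ParametricIntegral

theorem HasDerivAt.sum_sum_mul_mul_of_symm {ι : Type*} [Fintype ι] {γ : ι → ι → ℝ}
    (hγ : ∀ i k, γ i k = γ k i) {A : ι → ℝ → ℝ} {A' : ι → ℝ} {τ : ℝ}
    (hA : ∀ i, HasDerivAt (A i) (A' i) τ) :
    HasDerivAt (fun τ => ∑ i, ∑ k, A i τ * γ i k * A k τ)
      (2 * ∑ i, A' i * ∑ k, γ i k * A k τ) τ := by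
  have hswap : ∑ i, ∑ k, A i τ * γ i k * A' k = ∑ i, ∑ k, A' i * γ i k * A k τ := by
    rw [Finset.sum_comm]
    exact Finset.sum_congr rfl fun i _ => Finset.sum_congr rfl fun k _ => by rw [hγ]; ring
  refine (HasDerivAt.fun_sum fun i _ => HasDerivAt.fun_sum fun k _ =>
    ((hA i).mul_const (γ i k)).mul (hA k)).congr_deriv ?_
  calc ∑ i, ∑ k, (A' i * γ i k * A k τ + A i τ * γ i k * A' k)
      = ∑ i, ∑ k, A' i * γ i k * A k τ + ∑ i, ∑ k, A i τ * γ i k * A' k := by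
        simp only [Finset.sum_add_distrib]
    _ = 2 * ∑ i, A' i * ∑ k, γ i k * A k τ := by
        rw [hswap, ← two_mul]
        simp only [Finset.mul_sum, mul_assoc]

theorem continuous_of_trigBasis {a b : ℝ} {w : ℕ → ℝ → ℝ}
    (hw0 : ∀ x, w 0 x = 1 / Real.sqrt (b - a))
    (hwodd : ∀ j : ℕ, 1 ≤ j → ∀ x, w (2 * j - 1) x =
      Real.sqrt (2 / (b - a)) * Real.sin (2 * π * j * (x - a) / (b - a)))
    (hweven : ∀ j : ℕ, 1 ≤ j → ∀ x, w (2 * j) x =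
      Real.sqrt (2 / (b - a)) * Real.cos (2 * π * j * (x - a) / (b - a)))
    (l : ℕ) : Continuous (w l) := by
  obtain ⟨j, rfl | rfl⟩ := Nat.even_or_odd' l
  · rcases j.eq_zero_or_pos with rfl | hj
    · rw [funext hw0]
      exact continuous_const
    · rw [funext (hweven j hj)]
      fun_prop
  · rw [show 2 * j + 1 = 2 * (j + 1) - 1 by omega, funext (hwodd (j + 1) (by omega))]
    fun_prop

noncomputable section Hamiltonian

variable {ι κ : Type*} [Fintype κ]

/-- With `v = w(x)`, `modeSum q v i` is the paper's `(q w(x))_i`. -/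
def modeSum (c : ι × κ → ℝ) (v : κ → ℝ) (i : ι) : ℝ := ∑ l, c (i, l) * v l

def intensity (q p : ι × κ → ℝ) (v : κ → ℝ) (i : ι) : ℝ :=
  modeSum q v i ^ 2 + modeSum p v i ^ 2

theorem intensity_comm (q p : ι × κ → ℝ) : intensity q p = intensity p q := by
  ext v i
  exact add_comm _ _

theorem HasDerivAt.modeSum {c : ℝ → ι × κ → ℝ} {c' : ι × κ → ℝ} {τ : ℝ}
    (h : HasDerivAt c c' τ) (v : κ → ℝ) (i : ι) :
    HasDerivAt (fun τ => modeSum (c τ) v i) (modeSum c' v i) τ :=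
  .fun_sum fun l _ => (hasDerivAt_pi.1 h (i, l)).mul_const (v l)

section Update

variable [DecidableEq ι] [DecidableEq κ]

theorem modeSum_single (i₀ : ι) (j₀ : κ) (v : κ → ℝ) (i : ι) :
    modeSum (Pi.single (i₀, j₀) 1) v i = if i = i₀ then v j₀ else 0 := by
  simp [modeSum, Pi.single_apply, Prod.ext_iff, ite_and]

theorem hasDerivAt_intensity_update_right (q p : ι × κ → ℝ) (i₀ : ι) (j₀ : κ) (v : κ → ℝ)
    (i : ι) (τ : ℝ) :
    HasDerivAt (fun τ => intensity q (Function.update p (i₀, j₀) τ) v i)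
      (2 * modeSum (Function.update p (i₀, j₀) τ) v i * if i = i₀ then v j₀ else 0) τ := by
  have h := ((hasDerivAt_update p (i₀, j₀) τ).modeSum v i).pow 2
  rw [modeSum_single] at h
  simpa [intensity] using h.const_add (modeSum q v i ^ 2)

end Update

variable [Fintype ι]

def hamiltonian (a b : ℝ) (w : κ → ℝ → ℝ) (δ : κ → ℝ) (β : ι → ℝ) (γ : ι → ι → ℝ)
    (q p : ι × κ → ℝ) : ℝ :=
  1 / 2 * ∑ j, δ j ^ 2 * ((∑ i, β i * q (i, j) ^ 2) + ∑ i, β i * p (i, j) ^ 2)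
    - 1 / 4 * ∫ x in a..b, ∑ i, ∑ k,
        intensity q p (w · x) i * γ i k * intensity q p (w · x) k

theorem hamiltonian_comm (a b : ℝ) (w : κ → ℝ → ℝ) (δ : κ → ℝ) (β : ι → ℝ) (γ : ι → ι → ℝ)
    (q p : ι × κ → ℝ) : hamiltonian a b w δ β γ q p = hamiltonian a b w δ β γ p q := by
  simp only [hamiltonian, intensity_comm q p, add_comm (∑ i, β i * q (i, _) ^ 2)]

theorem differentiable_hamiltonian {a b : ℝ} {w : κ → ℝ → ℝ} (hw : ∀ l, Continuous (w l))
    (δ : κ → ℝ) (β : ι → ℝ) (γ : ι → ι → ℝ) :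
    Differentiable ℝ fun u : (ι × κ → ℝ) × (ι × κ → ℝ) => hamiltonian a b w δ β γ u.1 u.2 := by
  have hV := differentiable_intervalIntegral_comp (a := a) (b := b)
    (P := fun z : ((ι × κ → ℝ) × (ι × κ → ℝ)) × (κ → ℝ) =>
      ∑ i, ∑ k, intensity z.1.1 z.1.2 z.2 i * γ i k * intensity z.1.1 z.1.2 z.2 k)
    (by simp only [intensity, modeSum]; fun_prop) (continuous_pi hw)
  unfold hamiltonian
  exact (Differentiable.const_mul (by fun_prop) _).sub (hV.const_mul _)

variable [DecidableEq ι] [DecidableEq κ]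

theorem hasDerivAt_interaction_update_right {γ : ι → ι → ℝ} (hγ : ∀ i k, γ i k = γ k i)
    (q p : ι × κ → ℝ) (i₀ : ι) (j₀ : κ) (v : κ → ℝ) (τ : ℝ) :
    HasDerivAt
      (fun τ => ∑ i, ∑ k, intensity q (Function.update p (i₀, j₀) τ) v i * γ i k *
        intensity q (Function.update p (i₀, j₀) τ) v k)
      (4 * ((∑ k, γ i₀ k * intensity q (Function.update p (i₀, j₀) τ) v k) *
        modeSum (Function.update p (i₀, j₀) τ) v i₀ * v j₀)) τ := by
  refine (HasDerivAt.sum_sum_mul_mul_of_symm hγ fun i =>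
    hasDerivAt_intensity_update_right q p i₀ j₀ v i τ).congr_deriv ?_
  simp only [mul_ite, mul_zero, ite_mul, zero_mul, Finset.sum_ite_eq', Finset.mem_univ, if_true]
  ring

theorem hasDerivAt_kinetic_update_right (δ : κ → ℝ) (β : ι → ℝ) (X : κ → ℝ)
    (p : ι × κ → ℝ) (i₀ : ι) (j₀ : κ) :
    HasDerivAt
      (fun τ => ∑ j, δ j ^ 2 * (X j + ∑ i, β i * Function.update p (i₀, j₀) τ (i, j) ^ 2))
      (2 * (δ j₀ ^ 2 * β i₀ * p (i₀, j₀))) (p (i₀, j₀)) := by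
  have hcoord := hasDerivAt_pi.1 (hasDerivAt_update p (i₀, j₀) (p (i₀, j₀)))
  refine (HasDerivAt.fun_sum fun j _ => ((HasDerivAt.fun_sum fun i _ =>
    ((hcoord (i, j)).pow 2).const_mul (β i)).const_add (X j)).const_mul (δ j ^ 2)).congr_deriv ?_
  simp only [Nat.cast_ofNat, Function.update_eq_self, Nat.add_one_sub_one, pow_one,
    Pi.single_apply, Prod.ext_iff, ite_and, mul_ite, mul_one, mul_zero, sum_ite_eq', mem_univ,
    ↓reduceIte]
  ring

theorem hasDerivAt_hamiltonian_update_right {a b : ℝ} {w : κ → ℝ → ℝ}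
    (hw : ∀ l, Continuous (w l)) (δ : κ → ℝ) (β : ι → ℝ) {γ : ι → ι → ℝ}
    (hγ : ∀ i k, γ i k = γ k i) (q p : ι × κ → ℝ) (i₀ : ι) (j₀ : κ) :
    HasDerivAt (fun τ => hamiltonian a b w δ β γ q (Function.update p (i₀, j₀) τ))
      (δ j₀ ^ 2 * β i₀ * p (i₀, j₀) - ∫ x in a..b,
        (∑ k, γ i₀ k * intensity q p (w · x) k) * modeSum p (w · x) i₀ * w j₀ x)
      (p (i₀, j₀)) := by
  have hV := hasDerivAt_intervalIntegral_of_continuous (a := a) (b := b) (τ₀ := p (i₀, j₀))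
    (F := fun τ x => ∑ i, ∑ k, intensity q (Function.update p (i₀, j₀) τ) (w · x) i * γ i k *
      intensity q (Function.update p (i₀, j₀) τ) (w · x) k)
    (by simp only [intensity, modeSum]; fun_prop) (by simp only [intensity, modeSum]; fun_prop)
    fun τ x => hasDerivAt_interaction_update_right hγ q p i₀ j₀ (w · x) τ
  have hT := hasDerivAt_kinetic_update_right δ β (fun j => ∑ i, β i * q (i, j) ^ 2) p i₀ j₀
  refine ((hT.const_mul (1 / 2)).sub (hV.const_mul (1 / 4))).congr_deriv ?_
  rw [Function.update_eq_self, intervalIntegral.integral_const_mul]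
  ring

theorem hasDerivAt_hamiltonian_update_left {a b : ℝ} {w : κ → ℝ → ℝ}
    (hw : ∀ l, Continuous (w l)) (δ : κ → ℝ) (β : ι → ℝ) {γ : ι → ι → ℝ}
    (hγ : ∀ i k, γ i k = γ k i) (q p : ι × κ → ℝ) (i₀ : ι) (j₀ : κ) :
    HasDerivAt (fun τ => hamiltonian a b w δ β γ (Function.update q (i₀, j₀) τ) p)
      (δ j₀ ^ 2 * β i₀ * q (i₀, j₀) - ∫ x in a..b,
        (∑ k, γ i₀ k * intensity q p (w · x) k) * modeSum q (w · x) i₀ * w j₀ x)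
      (q (i₀, j₀)) := by
  convert hasDerivAt_hamiltonian_update_right hw δ β hγ p q i₀ j₀ using 1
  · exact funext fun τ => hamiltonian_comm a b w δ β γ _ p
  · rw [intensity_comm p q]

end Hamiltonian

theorem semidiscrete_hamiltonian_gradient_general
    (a b : ℝ)
    (w : ℕ → ℝ → ℝ)
    (hw0 : ∀ x, w 0 x = 1 / Real.sqrt (b - a))
    (hwodd : ∀ j : ℕ, 1 ≤ j → ∀ x, w (2 * j - 1) x =
      Real.sqrt (2 / (b - a)) * Real.sin (2 * π * j * (x - a) / (b - a)))
    (hweven : ∀ j : ℕ, 1 ≤ j → ∀ x, w (2 * j) x =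
      Real.sqrt (2 / (b - a)) * Real.cos (2 * π * j * (x - a) / (b - a)))
    (d : ℕ → ℝ)
    (N n : ℕ)
    (β : Fin n → ℝ) (γ : Fin n → Fin n → ℝ) (hγ : ∀ i k, γ i k = γ k i)
    (H : ((Fin n × Fin (2 * N + 1)) → ℝ) → ((Fin n × Fin (2 * N + 1)) → ℝ) → ℝ)
    (hH : ∀ q p, H q p =
      (1 / 2) * (∑ j : Fin (2 * N + 1), d (j : ℕ) ^ 2 *
          ((∑ i, β i * (q (i, j)) ^ 2) + ∑ i, β i * (p (i, j)) ^ 2))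
        - (1 / 4) * ∫ x in a..b, ∑ i, ∑ k,
            ((∑ l : Fin (2 * N + 1), q (i, l) * w (l : ℕ) x) ^ 2
              + (∑ l : Fin (2 * N + 1), p (i, l) * w (l : ℕ) x) ^ 2) * γ i k *
            ((∑ l : Fin (2 * N + 1), q (k, l) * w (l : ℕ) x) ^ 2
              + (∑ l : Fin (2 * N + 1), p (k, l) * w (l : ℕ) x) ^ 2)) :
    Differentiable ℝ (fun qp : ((Fin n × Fin (2 * N + 1)) → ℝ) ×
        ((Fin n × Fin (2 * N + 1)) → ℝ) => H qp.1 qp.2)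
    ∧ ∀ (q p : (Fin n × Fin (2 * N + 1)) → ℝ) (i : Fin n) (j : Fin (2 * N + 1)),
      HasDerivAt (fun τ => H q (Function.update p (i, j) τ))
        (d (j : ℕ) ^ 2 * β i * p (i, j)
          - ∫ x in a..b,
              (∑ k, γ i k * ((∑ l : Fin (2 * N + 1), q (k, l) * w (l : ℕ) x) ^ 2
                + (∑ l : Fin (2 * N + 1), p (k, l) * w (l : ℕ) x) ^ 2)) *
              (∑ l : Fin (2 * N + 1), p (i, l) * w (l : ℕ) x) * w (j : ℕ) x)
        (p (i, j))
      ∧ HasDerivAt (fun τ => H (Function.update q (i, j) τ) p)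
        (d (j : ℕ) ^ 2 * β i * q (i, j)
          - ∫ x in a..b,
              (∑ k, γ i k * ((∑ l : Fin (2 * N + 1), q (k, l) * w (l : ℕ) x) ^ 2
                + (∑ l : Fin (2 * N + 1), p (k, l) * w (l : ℕ) x) ^ 2)) *
              (∑ l : Fin (2 * N + 1), q (i, l) * w (l : ℕ) x) * w (j : ℕ) x)
        (q (i, j)) := by
  have hw : ∀ l : Fin (2 * N + 1), Continuous (w l) := fun l =>
    continuous_of_trigBasis hw0 hwodd hweven l
  obtain rfl : H = hamiltonian a b (fun l : Fin (2 * N + 1) => w l) (fun l => d l) β γ :=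
    funext₂ hH
  exact ⟨differentiable_hamiltonian hw _ β γ, fun q p i j =>
    ⟨hasDerivAt_hamiltonian_update_right hw _ β hγ q p i j,
      hasDerivAt_hamiltonian_update_left hw _ β hγ q p i j⟩⟩

/-- The semi-discrete Hamiltonian `H(q,p)` of the Manakov system is
differentiable, with partial derivatives
`∂H/∂p_{ij} = d_j² β_i p_{ij} − ∫_a^b (Σ_k γ_{ik} ((qw)_k² + (pw)_k²)) (pw)_i w_j dx` and
`∂H/∂q_{ij} = d_j² β_i q_{ij} − ∫_a^b (Σ_k γ_{ik} ((qw)_k² + (pw)_k²)) (qw)_i w_j dx`. -/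
theorem semidiscrete_hamiltonian_gradient
    (a b : ℝ) (hab : a < b)
    (w : ℕ → ℝ → ℝ)
    (hw0 : ∀ x, w 0 x = 1 / Real.sqrt (b - a))
    (hwodd : ∀ j : ℕ, 1 ≤ j → ∀ x, w (2 * j - 1) x =
      Real.sqrt (2 / (b - a)) * Real.sin (2 * π * j * (x - a) / (b - a)))
    (hweven : ∀ j : ℕ, 1 ≤ j → ∀ x, w (2 * j) x =
      Real.sqrt (2 / (b - a)) * Real.cos (2 * π * j * (x - a) / (b - a)))
    (d : ℕ → ℝ) (hd : ∀ k : ℕ, d k = 2 * π / (b - a) * (⌈(k : ℝ) / 2⌉ : ℤ))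
    (N n : ℕ) (hN : 1 ≤ N) (hn : 1 ≤ n)
    (β : Fin n → ℝ) (γ : Fin n → Fin n → ℝ) (hγ : ∀ i k, γ i k = γ k i)
    (H : ((Fin n × Fin (2 * N + 1)) → ℝ) → ((Fin n × Fin (2 * N + 1)) → ℝ) → ℝ)
    (hH : ∀ q p, H q p =
      (1 / 2) * (∑ j : Fin (2 * N + 1), d (j : ℕ) ^ 2 *
          ((∑ i, β i * (q (i, j)) ^ 2) + ∑ i, β i * (p (i, j)) ^ 2))
        - (1 / 4) * ∫ x in a..b, ∑ i, ∑ k,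
            ((∑ l : Fin (2 * N + 1), q (i, l) * w (l : ℕ) x) ^ 2
              + (∑ l : Fin (2 * N + 1), p (i, l) * w (l : ℕ) x) ^ 2) * γ i k *
            ((∑ l : Fin (2 * N + 1), q (k, l) * w (l : ℕ) x) ^ 2
              + (∑ l : Fin (2 * N + 1), p (k, l) * w (l : ℕ) x) ^ 2)) :
    Differentiable ℝ (fun qp : ((Fin n × Fin (2 * N + 1)) → ℝ) ×
        ((Fin n × Fin (2 * N + 1)) → ℝ) => H qp.1 qp.2)
    ∧ ∀ (q p : (Fin n × Fin (2 * N + 1)) → ℝ) (i : Fin n) (j : Fin (2 * N + 1)),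
      HasDerivAt (fun τ => H q (Function.update p (i, j) τ))
        (d (j : ℕ) ^ 2 * β i * p (i, j)
          - ∫ x in a..b,
              (∑ k, γ i k * ((∑ l : Fin (2 * N + 1), q (k, l) * w (l : ℕ) x) ^ 2
                + (∑ l : Fin (2 * N + 1), p (k, l) * w (l : ℕ) x) ^ 2)) *
              (∑ l : Fin (2 * N + 1), p (i, l) * w (l : ℕ) x) * w (j : ℕ) x)
        (p (i, j))
      ∧ HasDerivAt (fun τ => H (Function.update q (i, j) τ) p)
        (d (j : ℕ) ^ 2 * β i * q (i, j)
          - ∫ x in a..b,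
              (∑ k, γ i k * ((∑ l : Fin (2 * N + 1), q (k, l) * w (l : ℕ) x) ^ 2
                + (∑ l : Fin (2 * N + 1), p (k, l) * w (l : ℕ) x) ^ 2)) *
              (∑ l : Fin (2 * N + 1), q (i, l) * w (l : ℕ) x) * w (j : ℕ) x)
        (q (i, j)) :=
  semidiscrete_hamiltonian_gradient_general a b w hw0 hwodd hweven d N n β γ hγ H hH
end

section
/- Let a < b, d ≥ 0 be an integer, and let f : ℝ → ℝ be a trigonometric polynomial of degree at most d on [a, b], i.e., f(x) = c_0 + Σ_{j=1}^d ( a_j cos(2πj(x − a)/(b − a)) + b_j sin(2πj(x − a)/(b − a)) ) for real coefficients c_0, a_j, b_j. Then for every integer m ≥ d + 1, the composite trapezoidal rule on the evenly spaced nodes x_i = a + i(b − a)/m, i = 0, …, m, computes the integral exactly: ((b − a)/m)·( (1/2) f(x_0) + Σ_{i=1}^{m−1} f(x_i) + (1/2) f(x_m) ) = ∫_a^b f(x) dx. -/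
open Real MeasureTheory intervalIntegral Finset

lemma sin_two_pi_nat' (n : ℕ) : Real.sin (2 * π * n) = 0 := by
  have := Real.sin_int_mul_pi (2*n)
  push_cast at this
  rw [show (2:ℝ) * π * n = 2 * n * π by ring]
  exact this

lemma cos_two_pi_nat' (n : ℕ) : Real.cos (2 * π * n) = 1 := by
  have := Real.cos_nat_mul_two_pi n
  rw [show (2:ℝ) * π * n = n * (2 * π) by ring]
  exact this

lemma sum_exp_zero' (m j : ℕ) (hj1 : 1 ≤ j) (hjm : j < m) :
    ∑ i ∈ range m, Complex.exp ((2 * π * j * i / m : ℝ) * Complex.I) = 0 := by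
  have hm0 : (m:ℝ) ≠ 0 := Nat.cast_ne_zero.2 (by omega)
  have hm0c : (m:ℂ) ≠ 0 := Nat.cast_ne_zero.2 (by omega)
  set z : ℂ := Complex.exp ((2 * π * j / m : ℝ) * Complex.I) with hz
  have hz1 : z ≠ 1 := by
    rw [hz, Ne, Complex.exp_eq_one_iff]
    rintro ⟨n, hn⟩
    have h3 : (2 * π * j / m : ℝ) = n * (2 * π) := by
      have := congrArg Complex.im hn
      simpa using this
    have hpi : (0:ℝ) < π := Real.pi_pos
    have h5 : (j:ℝ) = n * m := by
      field_simp at h3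
      nlinarith [h3]
    have h6 : (j:ℤ) = n * m := by exact_mod_cast h5
    have hj0 : (1:ℤ) ≤ j := by exact_mod_cast hj1
    have hjm' : (j:ℤ) < m := by exact_mod_cast hjm
    have hmpos : (1:ℤ) ≤ m := by exact_mod_cast Nat.one_le_iff_ne_zero.2 (by omega)
    rcases le_or_gt n 0 with h|h
    · nlinarith
    · nlinarith
  have hzm : z ^ m = 1 := by
    rw [hz, ← Complex.exp_nat_mul]
    have : (m : ℂ) * (((2 * π * j / m : ℝ)) * Complex.I) = (j : ℤ) * (2 * π * Complex.I) := by
      push_cast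
      field_simp
    rw [this, Complex.exp_int_mul_two_pi_mul_I]
  have key : ∀ i ∈ range m, Complex.exp ((2 * π * j * i / m : ℝ) * Complex.I) = z ^ i := by
    intro i _
    rw [hz, ← Complex.exp_nat_mul]
    congr 1
    push_cast
    ring
  rw [Finset.sum_congr rfl key, geom_sum_eq hz1, hzm]
  simp

lemma sum_cos_zero' (m j : ℕ) (hj1 : 1 ≤ j) (hjm : j < m) :
    ∑ i ∈ range m, Real.cos (2 * π * j * i / m) = 0 := by
  have := congrArg Complex.re (sum_exp_zero' m j hj1 hjm)
  rw [Complex.re_sum] at this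
  simp only [Complex.exp_ofReal_mul_I_re, Complex.zero_re] at this
  exact this

lemma sum_sin_zero' (m j : ℕ) (hj1 : 1 ≤ j) (hjm : j < m) :
    ∑ i ∈ range m, Real.sin (2 * π * j * i / m) = 0 := by
  have := congrArg Complex.im (sum_exp_zero' m j hj1 hjm)
  rw [Complex.im_sum] at this
  simp only [Complex.exp_ofReal_mul_I_im, Complex.zero_im] at this
  exact this

lemma int_cos_zero' (a b : ℝ) (hab : a < b) (j : ℕ) (hj : 1 ≤ j) :
    ∫ x in a..b, Real.cos (2 * π * j * (x - a) / (b - a)) = 0 := by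
  have hL : b - a ≠ 0 := by linarith
  have hj0 : (j:ℝ) ≠ 0 := Nat.cast_ne_zero.2 (by omega)
  have hpi : π ≠ 0 := Real.pi_ne_zero
  set k : ℝ := 2 * π * j / (b - a) with hk
  have hk0 : k ≠ 0 := by
    rw [hk]; positivity
  have h1 : ∀ x : ℝ, Real.cos (2 * π * j * (x - a) / (b - a)) = Real.cos (k * (x - a)) := by
    intro x; congr 1; rw [hk]; field_simp
  simp only [h1]
  rw [intervalIntegral.integral_comp_sub_right (fun x => Real.cos (k * x)) a]
  rw [intervalIntegral.integral_comp_mul_left (fun x => Real.cos x) hk0]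
  rw [integral_cos]
  have h2 : k * (b - a) = 2 * π * j := by rw [hk]; field_simp
  simp [h2, sin_two_pi_nat' j]

lemma int_sin_zero' (a b : ℝ) (hab : a < b) (j : ℕ) (hj : 1 ≤ j) :
    ∫ x in a..b, Real.sin (2 * π * j * (x - a) / (b - a)) = 0 := by
  have hL : b - a ≠ 0 := by linarith
  have hj0 : (j:ℝ) ≠ 0 := Nat.cast_ne_zero.2 (by omega)
  set k : ℝ := 2 * π * j / (b - a) with hk
  have hk0 : k ≠ 0 := by rw [hk]; positivity
  have h1 : ∀ x : ℝ, Real.sin (2 * π * j * (x - a) / (b - a)) = Real.sin (k * (x - a)) := by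
    intro x; congr 1; rw [hk]; field_simp
  simp only [h1]
  rw [intervalIntegral.integral_comp_sub_right (fun x => Real.sin (k * x)) a]
  rw [intervalIntegral.integral_comp_mul_left (fun x => Real.sin x) hk0]
  rw [integral_sin]
  have h2 : k * (b - a) = 2 * π * j := by rw [hk]; field_simp
  simp [h2, cos_two_pi_nat' j]

/-- The composite trapezoidal rule with `m ≥ d + 1` evenly spaced
subintervals integrates exactly every trigonometric polynomial of degree at most `d`
on `[a, b]`. -/
theorem trapezoidal_rule_exact_for_trig_polynomials
    (a b : ℝ) (hab : a < b) (d : ℕ)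
    (f : ℝ → ℝ) (c0 : ℝ) (A B : ℕ → ℝ)
    (hf : ∀ x, f x = c0 + ∑ j ∈ Icc 1 d,
      (A j * Real.cos (2 * π * j * (x - a) / (b - a))
        + B j * Real.sin (2 * π * j * (x - a) / (b - a))))
    (m : ℕ) (hm : d + 1 ≤ m) :
    ((b - a) / m) * ((1 / 2) * f a
        + (∑ i ∈ Ico 1 m, f (a + i * (b - a) / m))
        + (1 / 2) * f b) =
      ∫ x in a..b, f x := by
  have hL : b - a ≠ 0 := by linarith
  have hm1 : 1 ≤ m := by omega
  have hm0 : (m:ℝ) ≠ 0 := Nat.cast_ne_zero.2 (by omega)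
  -- the integral
  have hcont : ∀ j ∈ Icc 1 d, IntervalIntegrable
      (fun x => A j * Real.cos (2 * π * j * (x - a) / (b - a))
        + B j * Real.sin (2 * π * j * (x - a) / (b - a))) volume a b := by
    intro j _
    apply Continuous.intervalIntegrable
    fun_prop
  have hrhs : (∫ x in a..b, f x) = c0 * (b - a) := by
    simp only [hf]
    have hsumInt : IntervalIntegrable (fun x => ∑ j ∈ Icc 1 d,
        (A j * Real.cos (2 * π * j * (x - a) / (b - a))
          + B j * Real.sin (2 * π * j * (x - a) / (b - a)))) volume a b := by
      apply Continuous.intervalIntegrable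
      apply continuous_finset_sum
      intro j _
      fun_prop
    rw [intervalIntegral.integral_add intervalIntegrable_const hsumInt]
    rw [intervalIntegral.integral_finset_sum hcont]
    rw [intervalIntegral.integral_const]
    have hz : ∀ j ∈ Icc 1 d,
        (∫ x in a..b, (A j * Real.cos (2 * π * j * (x - a) / (b - a))
          + B j * Real.sin (2 * π * j * (x - a) / (b - a)))) = 0 := by
      intro j hj
      have hj1 : 1 ≤ j := (Finset.mem_Icc.1 hj).1
      have hci : IntervalIntegrable
          (fun x => A j * Real.cos (2 * π * j * (x - a) / (b - a))) volume a b := by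
        apply Continuous.intervalIntegrable; fun_prop
      have hsi : IntervalIntegrable
          (fun x => B j * Real.sin (2 * π * j * (x - a) / (b - a))) volume a b := by
        apply Continuous.intervalIntegrable; fun_prop
      rw [intervalIntegral.integral_add hci hsi,
        intervalIntegral.integral_const_mul, intervalIntegral.integral_const_mul,
        int_cos_zero' a b hab j hj1, int_sin_zero' a b hab j hj1]
      ring
    rw [Finset.sum_congr rfl hz]
    simp [smul_eq_mul]
    ring
  -- node values
  have hnode : ∀ i : ℕ, f (a + i * (b - a) / m) = c0 + ∑ j ∈ Icc 1 d,
      (A j * Real.cos (2 * π * j * i / m) + B j * Real.sin (2 * π * j * i / m)) := by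
    intro i
    rw [hf]
    congr 1
    refine Finset.sum_congr rfl fun j _ => ?_
    have harg : 2 * π * j * ((a + i * (b - a) / m) - a) / (b - a) = 2 * π * j * i / m := by
      field_simp
      ring
    rw [harg]
  have hfa : f a = c0 + ∑ j ∈ Icc 1 d, A j := by
    rw [hf]; simp
  have hfb : f b = c0 + ∑ j ∈ Icc 1 d, A j := by
    rw [hf]
    congr 1
    refine Finset.sum_congr rfl fun j _ => ?_
    have harg : 2 * π * j * (b - a) / (b - a) = 2 * π * j := by field_simp
    rw [harg, cos_two_pi_nat' j, sin_two_pi_nat' j]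
    ring
  have hnode0 : f (a + (0:ℕ) * (b - a) / m) = f a := by norm_num
  have hsplit : (1/2) * f a + (∑ i ∈ Ico 1 m, f (a + i * (b - a) / m)) + (1/2) * f b
      = ∑ i ∈ range m, f (a + i * (b - a) / m) := by
    rw [Finset.range_eq_Ico, Finset.sum_eq_sum_Ico_succ_bot hm1, hnode0, hfa, hfb]
    ring
  have hsum : ∑ i ∈ range m, f (a + i * (b - a) / m) = m * c0 := by
    simp only [hnode]
    rw [Finset.sum_add_distrib, Finset.sum_const, Finset.card_range, Finset.sum_comm]
    have hz : ∀ j ∈ Icc 1 d, (∑ i ∈ range m,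
        (A j * Real.cos (2 * π * j * i / m) + B j * Real.sin (2 * π * j * i / m))) = 0 := by
      intro j hj
      obtain ⟨hj1, hj2⟩ := Finset.mem_Icc.1 hj
      rw [Finset.sum_add_distrib, ← Finset.mul_sum, ← Finset.mul_sum,
        sum_cos_zero' m j hj1 (by omega), sum_sin_zero' m j hj1 (by omega)]
      ring
    rw [Finset.sum_congr rfl hz]
    simp [nsmul_eq_mul]
  rw [hsplit, hsum, hrhs]
  field_simp
end
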